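/- arXiv:2505.08136 — 5 statements merged into one kernel-verified Lean document; each statement's English description precedes it below -/
import Mathlib

section
/- There exists an optimal segmentation solution to the max-k-cut customer segmentation problem: for every k ≥ 1 there is an assignment x : V → Fin k such that f(x) ≥ f(y) for every assignment y : V → Fin k, and such that for all customers i, j ∈ V, s(i) = s(j) implies x(i) = x(j). -/
open Finset

variable {V : Type*} [Fintype V]

def wgt (s : V → ℤ × ℤ × ℤ) (i j : V) : ℤ :=
  |(s i).1 - (s j).1| + |(s i).2.1 - (s j).2.1| + |(s i).2.2 - (s j).2.2|

def objf (s : V → ℤ × ℤ × ℤ) {k : ℕ} (x : V → Fin k) : ℤ :=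
  ∑ i : V, ∑ j : V, if x i ≠ x j then wgt s i j else 0

def wgt' (s : V → ℤ × ℤ × ℤ) (a b : ℤ × ℤ × ℤ) : ℤ :=
  ∑ i ∈ univ.filter (fun i => s i = a), ∑ j ∈ univ.filter (fun j => s j = b), wgt s i j

def objR (s : V → ℤ × ℤ × ℤ) {k : ℕ} (y : ℤ × ℤ × ℤ → Fin k) : ℤ :=
  ∑ a ∈ univ.image s, ∑ b ∈ univ.image s, if y a ≠ y b then wgt' s a b else 0

/-! Two customers with the same score are twins: they have the same weight to every customer and
weight zero to each other. Giving one twin the label of the other changes the cut by amounts of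
opposite sign depending on which twin is moved, so at an optimum either move keeps the cut optimal.
Relabelling the customers one at a time to the label of an already treated twin then turns any
optimal assignment into one that is constant on every score class. -/

open Function

section Cut

variable {κ M : Type*} [DecidableEq V] [DecidableEq κ] [AddCommGroup M]

def cutValue (W : V → V → M) (x : V → κ) : M :=
  ∑ p, ∑ q, if x p ≠ x q then W p q else 0

def externalWeight (W : V → V → M) (x : V → κ) (i : V) (c : κ) : M :=
  ∑ q, if c ≠ x q then W i q else 0

theorem cutValue_update {W : V → V → M} (hW : ∀ p q, W p q = W q p)
    (x : V → κ) {i : V} (hi : W i i = 0) (c : κ) :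
    cutValue W (update x i c) =
      cutValue W x + 2 • (externalWeight W x i c - externalWeight W x i (x i)) := by
  set δ : V → M := fun q => (if c ≠ x q then W i q else 0) - if x i ≠ x q then W i q else 0
  -- only row `i` and column `i` change, and the diagonal entry `(i, i)` vanishes
  have hterm : ∀ p q, (if update x i c p ≠ update x i c q then W p q else 0) =
      (if x p ≠ x q then W p q else 0) +
        ((if p = i then δ q else 0) + if q = i then δ p else 0) := by
    intro p q
    by_cases hp : p = i <;> by_cases hq : q = i
    · subst hp hq; simp [δ, hi]
    · subst hp; simp [δ, hq]
    · subst hq; simp [δ, hp, hW p, eq_comm]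
    · simp [hp, hq]
  simp only [cutValue, externalWeight, hterm, sum_add_distrib, sum_ite_irrel, sum_const_zero,
    sum_ite_eq', mem_univ, if_true]
  rw [← sum_sub_distrib, two_nsmul]

theorem cutValue_update_eq_of_forall_le [LinearOrder M] [IsOrderedAddMonoid M] {W : V → V → M}
    (hW : ∀ p q, W p q = W q p) {x : V → κ} (hx : ∀ y : V → κ, cutValue W y ≤ cutValue W x)
    {i j : V} (hij : W i = W j) (hWij : W i j = 0) :
    cutValue W (update x i (x j)) = cutValue W x := by
  have hii : W i i = 0 := by rw [congrFun hij i, hW, hWij]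
  have hjj : W j j = 0 := by rw [← congrFun hij j, hWij]
  have hE : ∀ c, externalWeight W x i c = externalWeight W x j c := by
    simp [externalWeight, hij]
  set a := externalWeight W x j (x j) - externalWeight W x i (x i)
  have hi : cutValue W (update x i (x j)) = cutValue W x + 2 • a := by
    rw [cutValue_update hW x hii, hE]
  have hj : cutValue W (update x j (x i)) = cutValue W x - 2 • a := by
    rw [cutValue_update hW x hjj, ← hE (x i), ← neg_sub, smul_neg, ← sub_eq_add_neg]
  have ha : 2 • a = 0 := le_antisymm
    (add_le_iff_nonpos_right _ |>.mp (hi ▸ hx _)) (sub_le_self_iff _ |>.mp (hj ▸ hx _))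
  rw [hi, ha, add_zero]

end Cut

theorem exists_forall_eq_of_update_closed {κ β : Type*} [DecidableEq V] (s : V → β)
    {P : (V → κ) → Prop} (hP : ∀ x i j, s i = s j → P x → P (update x i (x j)))
    {x₀ : V → κ} (h₀ : P x₀) :
    ∃ x, P x ∧ ∀ i j, s i = s j → x i = x j := by
  suffices h : ∀ S : Finset V, ∃ x, P x ∧ ∀ i ∈ S, ∀ j ∈ S, s i = s j → x i = x j by
    obtain ⟨x, hx, hS⟩ := h univ
    exact ⟨x, hx, fun i j => hS i (mem_univ i) j (mem_univ j)⟩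
  intro S
  induction S using Finset.induction_on with
  | empty => exact ⟨x₀, h₀, by simp⟩
  | insert v S hv ih =>
    obtain ⟨x, hx, hS⟩ := ih
    by_cases hvS : ∃ u ∈ S, s u = s v
    · obtain ⟨u, hu, hsu⟩ := hvS
      have hred : ∀ i ∈ insert v S, ∃ i' ∈ S, s i' = s i ∧ update x v (x u) i = x i' := by
        intro i hi
        rcases eq_or_ne i v with rfl | hiv
        · exact ⟨u, hu, hsu, update_self ..⟩
        · exact ⟨i, (mem_insert.mp hi).resolve_left hiv, rfl, update_of_ne hiv ..⟩
      refine ⟨update x v (x u), hP x v u hsu.symm hx, fun i hi j hj hij => ?_⟩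
      obtain ⟨i', hi', hsi, hxi⟩ := hred i hi
      obtain ⟨j', hj', hsj, hxj⟩ := hred j hj
      rw [hxi, hxj]
      exact hS i' hi' j' hj' (by rw [hsi, hsj, hij])
    · refine ⟨x, hx, fun i hi j hj hij => ?_⟩
      rcases mem_insert.mp hi with rfl | hiS <;> rcases mem_insert.mp hj with rfl | hjS
      · rfl
      · exact absurd ⟨j, hjS, hij.symm⟩ hvS
      · exact absurd ⟨i, hiS, hij⟩ hvS
      · exact hS i hiS j hjS hij

theorem wgt_comm {ι : Type*} (s : ι → ℤ × ℤ × ℤ) (i j : ι) : wgt s i j = wgt s j i := by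
  simp only [wgt, abs_sub_comm]

theorem wgt_eq_of_eq {ι : Type*} {s : ι → ℤ × ℤ × ℤ} {i j : ι} (h : s i = s j) :
    wgt s i = wgt s j := by
  ext q
  simp only [wgt, h]

theorem wgt_eq_zero_of_eq {ι : Type*} {s : ι → ℤ × ℤ × ℤ} {i j : ι} (h : s i = s j) :
    wgt s i j = 0 := by
  simp [wgt, h]

theorem objf_eq_cutValue (s : V → ℤ × ℤ × ℤ) {k : ℕ} (x : V → Fin k) :
    objf s x = cutValue (wgt s) x :=
  rfl

/-- There exists an optimal segmentation solution to the max-k-cut problem. -/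
theorem exists_optimal_segmentation_solution (s : V → ℤ × ℤ × ℤ) (k : ℕ) (hk : 1 ≤ k) :
    ∃ x : V → Fin k, (∀ y : V → Fin k, objf s x ≥ objf s y) ∧
      (∀ i j : V, s i = s j → x i = x j) := by
  classical
  have : Nonempty (Fin k) := ⟨⟨0, hk⟩⟩
  obtain ⟨x₀, hx₀⟩ := Finite.exists_max (cutValue (wgt s) : (V → Fin k) → ℤ)
  have hupdate : ∀ (x : V → Fin k) i j, s i = s j →
      (∀ y, cutValue (wgt s) y ≤ cutValue (wgt s) x) →
      ∀ y, cutValue (wgt s) y ≤ cutValue (wgt s) (update x i (x j)) := fun x i j hs hx y =>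
    (hx y).trans_eq
      (cutValue_update_eq_of_forall_le (wgt_comm s) hx (wgt_eq_of_eq hs) (wgt_eq_zero_of_eq hs)).symm
  obtain ⟨x, hx, hseg⟩ := exists_forall_eq_of_update_closed s hupdate hx₀
  exact ⟨x, fun y => by simpa only [objf_eq_cutValue] using hx y, hseg⟩
end

section
/- The optimal objective value of the original max-k-cut problem equals the optimal objective value of the reduced problem: for every k ≥ 1, the maximum of f(x) over all assignments x : V → Fin k equals the maximum of f_R(y) over all assignments y : (ℤ × ℤ × ℤ) → Fin k. -/
open Finset

variable {V : Type*} [Fintype V]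

/-! The weight between two customers depends only on their scores and vanishes inside a score
class `F`. Hence, as long as the labels outside `F` are kept, the cut value is a constant plus
`∑ i ∈ F, gain (z i)` for a fixed function `gain` of a single label, and relabelling all of `F`
with the label of its best member does not decrease it. Doing this class after class turns any
assignment into one that factors through the scores, i.e. a reduced assignment `y` with at least
the same value; conversely `f_R(y) = f(y ∘ s)` for every reduced assignment. -/

section CutWeight

variable {V α κ R : Type*} [Fintype V] [DecidableEq κ]
  [AddCommMonoid R] [LinearOrder R] [IsOrderedAddMonoid R]

def cutWeight (w : V → V → R) (x : V → κ) : R :=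
  ∑ i, ∑ j, if x i ≠ x j then w i j else 0

omit [LinearOrder R] [IsOrderedAddMonoid R] in
lemma sum_sum_eq_sum_sum_add_sum_sum_compl [DecidableEq V] (F : Finset V) (f : V → V → R) :
    ∑ i, ∑ j, f i j = ∑ i ∈ F, ∑ j ∈ F, f i j + ∑ i ∈ F, ∑ j ∈ Fᶜ, (f i j + f j i) +
      ∑ i ∈ Fᶜ, ∑ j ∈ Fᶜ, f i j := by
  simp only [← sum_add_sum_compl F, sum_add_distrib]
  rw [sum_comm (s := Fᶜ) (t := F)]
  abel

lemma exists_cutWeight_le_recolor_fiber [DecidableEq α] (s : V → α) (W : α → α → R)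
    (hW : ∀ a, W a a = 0) (x : V → κ) (i₀ : V) :
    ∃ t : κ, cutWeight (fun i j => W (s i) (s j)) x ≤
      cutWeight (fun i j => W (s i) (s j)) (fun i => if s i = s i₀ then t else x i) := by
  classical
  set F : Finset V := {i | s i = s i₀}
  have mem_F {i : V} : i ∈ F ↔ s i = s i₀ := by simp [F]
  set gain : κ → R := fun u => ∑ j ∈ Fᶜ,
    ((if u ≠ x j then W (s i₀) (s j) else 0) + if x j ≠ u then W (s j) (s i₀) else 0)
  set C := ∑ i ∈ Fᶜ, ∑ j ∈ Fᶜ, if x i ≠ x j then W (s i) (s j) else 0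
  have cutWeight_eq (z : V → κ) (hz : ∀ j ∉ F, z j = x j) :
      cutWeight (fun i j => W (s i) (s j)) z = ∑ i ∈ F, gain (z i) + C := by
    rw [cutWeight, sum_sum_eq_sum_sum_add_sum_sum_compl F]
    have inside_F : ∑ i ∈ F, ∑ j ∈ F, (if z i ≠ z j then W (s i) (s j) else 0) = 0 :=
      sum_eq_zero fun i hi => sum_eq_zero fun j hj => by
        rw [mem_F.1 hi, mem_F.1 hj, hW, ite_self]
    have across : ∀ i ∈ F, ∑ j ∈ Fᶜ, ((if z i ≠ z j then W (s i) (s j) else 0) +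
        if z j ≠ z i then W (s j) (s i) else 0) = gain (z i) := fun i hi =>
      sum_congr rfl fun j hj => by rw [mem_F.1 hi, hz j (mem_compl.1 hj)]
    have outside_F : ∑ i ∈ Fᶜ, ∑ j ∈ Fᶜ, (if z i ≠ z j then W (s i) (s j) else 0) = C :=
      sum_congr rfl fun i hi => sum_congr rfl fun j hj => by
        rw [hz i (mem_compl.1 hi), hz j (mem_compl.1 hj)]
    rw [inside_F, sum_congr rfl across, outside_F, zero_add]
  obtain ⟨i₁, -, hmax⟩ := F.exists_max_image (fun i => gain (x i)) ⟨i₀, mem_F.2 rfl⟩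
  refine ⟨x i₁, ?_⟩
  rw [cutWeight_eq x fun _ _ => rfl, cutWeight_eq _ fun j hj => if_neg (mt mem_F.2 hj)]
  gcongr with i hi
  rw [if_pos (mem_F.1 hi)]
  exact hmax i hi

lemma exists_cutWeight_le_factorsThrough (s : V → α) (W : α → α → R) (hW : ∀ a, W a a = 0)
    (x : V → κ) :
    ∃ x' : V → κ, cutWeight (fun i j => W (s i) (s j)) x ≤
      cutWeight (fun i j => W (s i) (s j)) x' ∧ x'.FactorsThrough s := by
  classical
  suffices h : ∀ S : Finset V, ∃ x' : V → κ, cutWeight (fun i j => W (s i) (s j)) x ≤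
      cutWeight (fun i j => W (s i) (s j)) x' ∧ ∀ i ∈ S, ∀ j, s i = s j → x' i = x' j by
    obtain ⟨x', hle, hx'⟩ := h univ
    exact ⟨x', hle, fun i j hij => hx' i (mem_univ i) j hij⟩
  intro S
  induction S using Finset.induction_on with
  | empty => exact ⟨x, le_rfl, by simp⟩
  | insert i₀ S _ ih =>
    obtain ⟨x', hle, hx'⟩ := ih
    obtain ⟨t, hle_recolor⟩ := exists_cutWeight_le_recolor_fiber s W hW x' i₀
    refine ⟨_, hle.trans hle_recolor, fun i hi j hij => ?_⟩
    simp only [← hij]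
    split_ifs with h
    · rfl
    · obtain rfl | hi := mem_insert.1 hi
      · exact absurd rfl h
      · exact hx' i hi j hij

lemma exists_cutWeight_le_comp [Nonempty κ] (s : V → α) (W : α → α → R) (hW : ∀ a, W a a = 0)
    (x : V → κ) :
    ∃ y : α → κ, cutWeight (fun i j => W (s i) (s j)) x ≤
      cutWeight (fun i j => W (s i) (s j)) (y ∘ s) := by
  obtain ⟨x', hle, hx'⟩ := exists_cutWeight_le_factorsThrough s W hW x
  obtain ⟨y, rfl⟩ := (Function.factorsThrough_iff x').1 hx'
  exact ⟨y, hle⟩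

end CutWeight

lemma objf_eq_cutWeight (s : V → ℤ × ℤ × ℤ) {k : ℕ} (x : V → Fin k) :
    objf s x = cutWeight (fun i j => wgt id (s i) (s j)) x := rfl

lemma wgt_id_self (a : ℤ × ℤ × ℤ) : wgt id a a = 0 := by
  simp [wgt]

lemma objR_eq_objf_comp (s : V → ℤ × ℤ × ℤ) {k : ℕ} (y : ℤ × ℤ × ℤ → Fin k) :
    objR s y = objf s (y ∘ s) := by
  have sum_fibers (g : V → ℤ) : ∑ a ∈ univ.image s, ∑ i ∈ univ.filter (fun i => s i = a), g i =
      ∑ i, g i :=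
    sum_fiberwise_of_maps_to (fun i _ => mem_image_of_mem s (mem_univ i)) g
  calc objR s y
      = ∑ a ∈ univ.image s, ∑ i ∈ univ.filter (fun i => s i = a),
          ∑ b ∈ univ.image s, ∑ j ∈ univ.filter (fun j => s j = b),
            if y (s i) ≠ y (s j) then wgt s i j else 0 := by
        refine sum_congr rfl fun a _ => ?_
        rw [sum_comm]
        refine sum_congr rfl fun b _ => ?_
        simp only [wgt', ite_sum_zero]
        refine sum_congr rfl fun i hi => sum_congr rfl fun j hj => ?_
        rw [(mem_filter.1 hi).2, (mem_filter.1 hj).2]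
    _ = objf s (y ∘ s) := by
        simp only [sum_fibers, objf, Function.comp_apply]

/-- The optimal value of the original max-k-cut problem equals the optimal value
of the reduced problem. -/
theorem original_and_reduced_have_equal_optimal_values
    (s : V → ℤ × ℤ × ℤ) (k : ℕ) (hk : 1 ≤ k) :
    ∃ m : ℤ, IsGreatest (Set.range fun x : V → Fin k => objf s x) m ∧
      IsGreatest (Set.range fun y : ℤ × ℤ × ℤ → Fin k => objR s y) m := by
  have : Nonempty (Fin k) := ⟨⟨0, hk⟩⟩
  obtain ⟨x₀, hx₀⟩ := Finite.exists_max (objf s : (V → Fin k) → ℤ)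
  obtain ⟨y₀, hy₀⟩ := exists_cutWeight_le_comp s (wgt id) wgt_id_self x₀
  have hx₀_le_y₀ : objf s x₀ ≤ objR s y₀ := by
    rwa [objR_eq_objf_comp, objf_eq_cutWeight, objf_eq_cutWeight]
  have hobjR_le : ∀ y, objR s y ≤ objf s x₀ := fun y => objR_eq_objf_comp s y ▸ hx₀ _
  refine ⟨objf s x₀, ⟨⟨x₀, rfl⟩, ?_⟩, ⟨y₀, le_antisymm (hobjR_le y₀) hx₀_le_y₀⟩, ?_⟩
  · rintro _ ⟨x, rfl⟩
    exact hx₀ x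
  · rintro _ ⟨y, rfl⟩
    exact hobjR_le y
end

section
/- Lifting an optimal reduced solution yields an optimal original solution (correctness of Procedure 2): for every k ≥ 1, if y : (ℤ × ℤ × ℤ) → Fin k satisfies f_R(y) ≥ f_R(z) for every assignment z : (ℤ × ℤ × ℤ) → Fin k, then the assignment x = y ∘ s : V → Fin k satisfies f(x) ≥ f(x') for every assignment x' : V → Fin k; moreover this x is a segmentation solution. -/
/-!
The objective of a score-constant assignment `z ∘ s` is the reduced objective of `z`, so it
suffices to improve an arbitrary assignment `x` to a score-constant one. This is done one score
class `A = s⁻¹(a)` at a time: customers inside `A` are at distance `0` from each other, so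
`f(x) = C + 2 ∑_{i ∈ A} G(x i)`, where `C` and the gain `G(g)` of putting a customer of `A`
into group `g` only depend on `x` outside `A`. Moving all of `A` into a group maximising `G`
therefore does not decrease `f`.
-/

open Finset

variable {V : Type*} [Fintype V]

def scoreDist (a b : ℤ × ℤ × ℤ) : ℤ :=
  |a.1 - b.1| + |a.2.1 - b.2.1| + |a.2.2 - b.2.2|

omit [Fintype V] in
lemma wgt_eq_scoreDist (s : V → ℤ × ℤ × ℤ) (i j : V) : wgt s i j = scoreDist (s i) (s j) :=
  rfl

@[simp]
lemma scoreDist_self (a : ℤ × ℤ × ℤ) : scoreDist a a = 0 := by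
  simp [scoreDist]

lemma scoreDist_comm (a b : ℤ × ℤ × ℤ) : scoreDist a b = scoreDist b a := by
  simp only [scoreDist, abs_sub_comm]

section ClassGain

variable (s : V → ℤ × ℤ × ℤ) {k : ℕ}

def classGain (x : V → Fin k) (a : ℤ × ℤ × ℤ) (g : Fin k) : ℤ :=
  ∑ j, if g ≠ x j then scoreDist a (s j) else 0

lemma sum_sum_ite_and_eq_sum_classGain (x χ : V → Fin k) (a : ℤ × ℤ × ℤ) :
    ∑ i, ∑ j, (if s i = a ∧ χ i ≠ x j then scoreDist a (s j) else 0) =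
      ∑ i with s i = a, classGain s x a (χ i) := by
  rw [sum_filter]
  simp only [classGain, ite_and, sum_ite_irrel, sum_const_zero]

lemma objf_eq_of_eq_off_class (x χ : V → Fin k) (a : ℤ × ℤ × ℤ)
    (hχ : ∀ i, s i ≠ a → χ i = x i) :
    objf s χ = (∑ i, ∑ j, if s i ≠ a ∧ s j ≠ a ∧ x i ≠ x j then wgt s i j else 0) +
      2 * ∑ i with s i = a, classGain s x a (χ i) := by
  have term : ∀ i j, (if χ i ≠ χ j then wgt s i j else 0) =
      (if s i ≠ a ∧ s j ≠ a ∧ x i ≠ x j then wgt s i j else 0) +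
        -- a pair with both ends in the class has weight `0`, so it appears in no summand
        (if s i = a ∧ χ i ≠ x j then scoreDist a (s j) else 0) +
        (if s j = a ∧ χ j ≠ x i then scoreDist a (s i) else 0) := by
    intro i j
    by_cases hi : s i = a <;> by_cases hj : s j = a <;>
      simp [hi, hj, hχ, wgt_eq_scoreDist, scoreDist_comm, ne_comm]
  simp only [objf, term, sum_add_distrib]
  rw [sum_comm (f := fun i j => if s j = a ∧ χ j ≠ x i then scoreDist a (s i) else 0),
    sum_sum_ite_and_eq_sum_classGain]
  ring

end ClassGain

section Merge

variable (s : V → ℤ × ℤ × ℤ) {k : ℕ} [Nonempty (Fin k)]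

lemma exists_objf_le_merge_class (x : V → Fin k) (a : ℤ × ℤ × ℤ) :
    ∃ g : Fin k, objf s x ≤ objf s (fun i => if s i = a then g else x i) := by
  obtain ⟨g, -, hg⟩ := exists_max_image univ (classGain s x a) univ_nonempty
  refine ⟨g, ?_⟩
  rw [objf_eq_of_eq_off_class s x x a fun _ _ => rfl,
    objf_eq_of_eq_off_class s x _ a fun i hi => if_neg hi]
  have hgain : ∑ i with s i = a, classGain s x a (x i) ≤
      ∑ i with s i = a, classGain s x a (if s i = a then g else x i) :=
    sum_le_sum fun i hi => by
      rw [if_pos (mem_filter.1 hi).2]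
      exact hg _ (mem_univ _)
  linarith

lemma exists_objf_le_const_on_scores (x : V → Fin k) (T : Finset (ℤ × ℤ × ℤ)) :
    ∃ z : ℤ × ℤ × ℤ → Fin k, objf s x ≤ objf s (fun i => if s i ∈ T then z (s i) else x i) := by
  induction T using Finset.induction_on with
  | empty => exact ⟨Classical.arbitrary _, by simp⟩
  | insert a T _ ih =>
    obtain ⟨z, hz⟩ := ih
    obtain ⟨g, hg⟩ := exists_objf_le_merge_class s
      (fun i => if s i ∈ T then z (s i) else x i) a
    refine ⟨Function.update z a g, hz.trans (hg.trans_eq (congrArg (objf s) ?_))⟩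
    funext i
    by_cases hi : s i = a <;> simp [hi]

lemma exists_objf_le_objf_comp (x : V → Fin k) :
    ∃ z : ℤ × ℤ × ℤ → Fin k, objf s x ≤ objf s (z ∘ s) := by
  obtain ⟨z, hz⟩ := exists_objf_le_const_on_scores s x (univ.image s)
  exact ⟨z, by simpa [Function.comp_def] using hz⟩

end Merge

theorem lift_of_optimal_reduced_is_optimal_general (s : V → ℤ × ℤ × ℤ) (k : ℕ)
    (y : ℤ × ℤ × ℤ → Fin k) (hy : ∀ z : ℤ × ℤ × ℤ → Fin k, objR s y ≥ objR s z) :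
    (∀ x' : V → Fin k, objf s (y ∘ s) ≥ objf s x') ∧
      (∀ i j : V, s i = s j → (y ∘ s) i = (y ∘ s) j) := by
  have : Nonempty (Fin k) := ⟨y 0⟩
  refine ⟨fun x' => ?_, fun i j hij => congrArg y hij⟩
  obtain ⟨z, hz⟩ := exists_objf_le_objf_comp s x'
  calc objf s x' ≤ objf s (z ∘ s) := hz
    _ = objR s z := (objR_eq_objf_comp s z).symm
    _ ≤ objR s y := hy z
    _ = objf s (y ∘ s) := objR_eq_objf_comp s y

/-- Lifting an optimal reduced solution yields an optimal original solution, which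
moreover is a segmentation solution. -/
theorem lift_of_optimal_reduced_is_optimal (s : V → ℤ × ℤ × ℤ) (k : ℕ) (hk : 1 ≤ k)
    (y : ℤ × ℤ × ℤ → Fin k) (hy : ∀ z : ℤ × ℤ × ℤ → Fin k, objR s y ≥ objR s z) :
    (∀ x' : V → Fin k, objf s (y ∘ s) ≥ objf s x') ∧
      (∀ i j : V, s i = s j → (y ∘ s) i = (y ∘ s) j) :=
  lift_of_optimal_reduced_is_optimal_general s k y hy
end

section
/- Every segmentation solution factors through the score map with equal objective value: for every k ≥ 1, if x : V → Fin k is a segmentation solution, then there exists an assignment y : (ℤ × ℤ × ℤ) → Fin k such that y ∘ s = x and f_R(y) = f(x). -/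
open Finset

variable {V : Type*} [Fintype V]

/-!
Grouping the pairs `(i, j)` of customers by their score pair `(s i, s j)` turns the objective of
`y ∘ s` into the reduced objective of `y`, for every `y`. A segmentation solution `x` is constant on
the fibres of `s`, so it is `y ∘ s` for any extension `y` of `x` along `s`.
-/

lemma Finset.sum_sum_fiberwise_image {ι α M : Type*} [Fintype ι] [DecidableEq α]
    [AddCommMonoid M] (s : ι → α) (F : ι → ι → M) :
    ∑ a ∈ univ.image s, ∑ b ∈ univ.image s,
      ∑ i ∈ univ.filter (fun i => s i = a), ∑ j ∈ univ.filter (fun j => s j = b), F i j =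
    ∑ i, ∑ j, F i j := by
  have maps_to (i : ι) (_ : i ∈ univ) : s i ∈ univ.image s := mem_image_of_mem s (mem_univ i)
  calc _ = ∑ a ∈ univ.image s, ∑ i ∈ univ.filter (fun i => s i = a), ∑ j, F i j := by
        refine sum_congr rfl fun a _ => ?_
        rw [sum_comm]
        exact sum_congr rfl fun i _ => sum_fiberwise_of_maps_to maps_to _
    _ = _ := sum_fiberwise_of_maps_to maps_to _

/-- Every segmentation solution factors through the score map with equal objective value. -/
theorem segmentation_solution_factors (s : V → ℤ × ℤ × ℤ) (k : ℕ) (hk : 1 ≤ k)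
    (x : V → Fin k) (hx : ∀ i j : V, s i = s j → x i = x j) :
    ∃ y : ℤ × ℤ × ℤ → Fin k, y ∘ s = x ∧ objR s y = objf s x := by
  have hxs : Function.FactorsThrough x s := fun i j => hx i j
  have hys : Function.extend s x (fun _ => ⟨0, hk⟩) ∘ s = x := hxs.extend_comp _
  exact ⟨_, hys, by rw [objR_eq_objf_comp, hys]⟩
end

section
/- Exchange identity for moving a vertex to the group of a same-score vertex: for every k ≥ 1, every assignment x : V → Fin k, and all customers i, j ∈ V with s(i) = s(j) and x(i) ≠ x(j), the assignment x' obtained from x by reassigning j to group x(i) (i.e., x' = Function.update x j (x(i))) satisfies f(x') = f(x) − 2·S_q + 2·S_p, where S_p = ∑_{v ∈ V, x(v) ≠ x(i)} w(i,v) and S_q = ∑_{v ∈ V, x(v) ≠ x(j)} w(j,v). -/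
open Finset

variable {V : Type*} [Fintype V]

/-!
Reassigning `j` alone changes the cut indicator only on pairs containing `j`; since `w` is
symmetric, each such pair is counted once in each order, whence the factor `2`. As
`s i = s j`, the rows `w i ·` and `w j ·` coincide, so the new cut weight of `j` is `S_p`.
-/

theorem sum_sum_ite_ne_update {α R : Type*} [DecidableEq V] [DecidableEq α] [Ring R]
    (W : V → V → R) (hsymm : ∀ a b, W a b = W b a) (y : V → α) (j : V) (hWj : W j j = 0)
    (c : α) :
    ∑ a, ∑ b, (if Function.update y j c a ≠ Function.update y j c b then W a b else 0) =
      ∑ a, ∑ b, (if y a ≠ y b then W a b else 0)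
        - 2 * ∑ v, (if y v ≠ y j then W j v else 0)
        + 2 * ∑ v, (if y v ≠ c then W j v else 0) := by
  set X : V → R := fun v => (if y v ≠ c then W j v else 0) - (if y v ≠ y j then W j v else 0)
  have pair (a b : V) :
      (if Function.update y j c a ≠ Function.update y j c b then W a b else 0) =
        (if y a ≠ y b then W a b else 0) + (if a = j then X b else 0)
          + (if b = j then X a else 0) := by
    by_cases ha : a = j <;> by_cases hb : b = j
    · simp [X, ha, hb, hWj]
    · simp [X, ha, hb, ne_comm]
    · simp [X, ha, hb, hsymm a j]
    · simp [ha, hb]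
  simp only [pair, sum_add_distrib, sum_ite_irrel, sum_const_zero, sum_ite_eq', mem_univ, if_true,
    X, sum_sub_distrib]
  noncomm_ring

omit [Fintype V] in
lemma wgt_comm_s5 (s : V → ℤ × ℤ × ℤ) (a b : V) : wgt s a b = wgt s b a := by
  simp only [wgt, abs_sub_comm]

omit [Fintype V] in
lemma wgt_self (s : V → ℤ × ℤ × ℤ) (a : V) : wgt s a a = 0 := by
  simp [wgt]

omit [Fintype V] in
lemma wgt_congr_left (s : V → ℤ × ℤ × ℤ) {a b : V} (h : s a = s b) :
    wgt s a = wgt s b := by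
  funext v; simp only [wgt, h]

theorem exchange_identity_general [DecidableEq V] (s : V → ℤ × ℤ × ℤ) (k : ℕ)
    (x : V → Fin k) (i j : V) (hs : s i = s j) :
    objf s (Function.update x j (x i)) =
      objf s x - 2 * (∑ v : V, if x v ≠ x j then wgt s j v else 0)
        + 2 * (∑ v : V, if x v ≠ x i then wgt s i v else 0) := by
  rw [objf, objf, sum_sum_ite_ne_update (wgt s) (wgt_comm_s5 s) x j (wgt_self s j),
    wgt_congr_left s hs]

/-- Exchange identity for moving a vertex to the group of a same-score vertex. -/
theorem exchange_identity [DecidableEq V] (s : V → ℤ × ℤ × ℤ) (k : ℕ) (hk : 1 ≤ k)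
    (x : V → Fin k) (i j : V) (hs : s i = s j) (hx : x i ≠ x j) :
    objf s (Function.update x j (x i)) =
      objf s x - 2 * (∑ v : V, if x v ≠ x j then wgt s j v else 0)
        + 2 * (∑ v : V, if x v ≠ x i then wgt s i v else 0) :=
  exchange_identity_general s k x i j hs
end
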